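/- Define h(x) = ((1-x^2)/x) * log((1+x)/(1-x)) for x in (0,1). Then h'(x) < -2x < 0 for all x in (0,1), and the limit of h(x) as x tends to 0 from above equals 2; consequently h(x) < 2 for all x in (0,1). -/

import Mathlib

/-!
Write `L x = log ((1 + x) / (1 - x)) = ∑ 2 x^(2k+1) / (2k+1)`. For `0 < x < 1` every term is
positive and at most `2 x^(2k+1)`, so `2x < L x < 2x / (1 - x²)`, strictly. The upper bound is
`hAux x < 2`. Since `hAux' x = 2/x - (1 + x²)/x² · L x`, the lower bound gives `hAux' x < -2x`.
Finally `hAux x = (1 - x²) · (L x - L 0) / x → L' 0 = 2`.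
-/

noncomputable def hAux (x : ℝ) : ℝ := ((1 - x ^ 2) / x) * Real.log ((1 + x) / (1 - x))

open Real Filter Topology

lemma hasDerivAt_log_one_add_div_one_sub {x : ℝ} (hx₁ : x ≠ 1) (hx₂ : x ≠ -1) :
    HasDerivAt (fun y => log ((1 + y) / (1 - y))) (2 / (1 - x ^ 2)) x := by
  have h₁ : 1 - x ≠ 0 := sub_ne_zero.mpr hx₁.symm
  have h₂ : 1 + x ≠ 0 := fun h => hx₂ (by linarith)
  have h₃ : 1 - x ^ 2 ≠ 0 := sub_ne_zero.mpr (sq_ne_one_iff.mpr ⟨hx₁, hx₂⟩).symm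
  have hq : HasDerivAt (fun y => (1 + y) / (1 - y)) (2 / (1 - x) ^ 2) x :=
    (((hasDerivAt_id' x).const_add 1).fun_div ((hasDerivAt_id' x).const_sub 1) h₁).congr_deriv
      (by ring)
  convert hq.log (div_ne_zero h₂ h₁) using 1
  field_simp
  ring

lemma hasSum_log_one_add_div_one_sub {x : ℝ} (hx : |x| < 1) :
    HasSum (fun k : ℕ => 2 * (1 / (2 * k + 1)) * x ^ (2 * k + 1)) (log ((1 + x) / (1 - x))) := by
  obtain ⟨h₁, h₂⟩ := abs_lt.mp hx
  rw [log_div (by linarith) (by linarith)]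
  exact hasSum_log_sub_log_of_abs_lt_one hx

lemma two_mul_lt_log_one_add_div_one_sub {x : ℝ} (hx₀ : 0 < x) (hx₁ : x < 1) :
    2 * x < log ((1 + x) / (1 - x)) := by
  have hsum := hasSum_log_one_add_div_one_sub (abs_lt.mpr ⟨by linarith, hx₁⟩)
  refine hasSum_lt (f := fun k => if k = 0 then 2 * x else 0) (i := 1) (fun k => ?_) ?_
    (hasSum_ite_eq 0 (2 * x)) hsum
  · rcases eq_or_ne k 0 with rfl | hk
    · simp
    · simp only [hk, if_false]; positivity
  · norm_num; positivity

lemma log_one_add_div_one_sub_lt {x : ℝ} (hx₀ : 0 < x) (hx₁ : x < 1) :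
    log ((1 + x) / (1 - x)) < 2 * x / (1 - x ^ 2) := by
  have hsum := hasSum_log_one_add_div_one_sub (abs_lt.mpr ⟨by linarith, hx₁⟩)
  have hgeom : HasSum (fun k : ℕ => 2 * x ^ (2 * k + 1)) (2 * x / (1 - x ^ 2)) := by
    have hterm : (fun k : ℕ => 2 * x ^ (2 * k + 1)) = fun k => 2 * x * (x ^ 2) ^ k := by
      funext k; ring
    rw [hterm, div_eq_mul_inv]
    exact (hasSum_geometric_of_lt_one (sq_nonneg x) (by nlinarith)).mul_left (2 * x)
  refine hasSum_lt (i := 1) (fun k => ?_) ?_ hsum hgeom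
  · have hcoeff : 1 / (2 * (k : ℝ) + 1) ≤ 1 :=
      div_le_one_of_le₀ (by linarith [k.cast_nonneg (α := ℝ)]) (by positivity)
    have hpow : 0 < x ^ (2 * k + 1) := by positivity
    dsimp only
    nlinarith
  · norm_num; nlinarith [pow_pos hx₀ 3]

lemma hasDerivAt_hAux {x : ℝ} (hx₀ : x ≠ 0) (hx₁ : x ≠ 1) (hx₂ : x ≠ -1) :
    HasDerivAt hAux (2 / x - (1 + x ^ 2) / x ^ 2 * log ((1 + x) / (1 - x))) x := by
  have h₃ : 1 - x ^ 2 ≠ 0 := sub_ne_zero.mpr (sq_ne_one_iff.mpr ⟨hx₁, hx₂⟩).symm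
  have hq := ((hasDerivAt_pow 2 x).const_sub 1).fun_div (hasDerivAt_id' x) hx₀
  refine (hq.fun_mul (hasDerivAt_log_one_add_div_one_sub hx₁ hx₂)).congr_deriv ?_
  field_simp
  ring

lemma deriv_hAux_lt {x : ℝ} (hx₀ : 0 < x) (hx₁ : x < 1) : deriv hAux x < -2 * x := by
  rw [(hasDerivAt_hAux hx₀.ne' hx₁.ne (by linarith)).deriv]
  have hL := two_mul_lt_log_one_add_div_one_sub hx₀ hx₁
  calc 2 / x - (1 + x ^ 2) / x ^ 2 * log ((1 + x) / (1 - x))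
      < 2 / x - (1 + x ^ 2) / x ^ 2 * (2 * x) := by gcongr
    _ = -2 * x := by field_simp; ring

lemma tendsto_hAux_nhdsGT_zero : Tendsto hAux (𝓝[>] 0) (𝓝 2) := by
  have hslope :=
    (hasDerivAt_log_one_add_div_one_sub (x := 0) (by norm_num) (by norm_num)).tendsto_slope
  have hpoly : Tendsto (fun x : ℝ => 1 - x ^ 2) (𝓝[>] 0) (𝓝 1) :=
    ((by fun_prop : Continuous fun x : ℝ => 1 - x ^ 2).tendsto' 0 1 (by norm_num)).mono_left
      nhdsWithin_le_nhds
  have hprod := hpoly.mul (hslope.mono_left (nhdsGT_le_nhdsNE 0))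
  norm_num at hprod
  refine hprod.congr' (eventually_nhdsWithin_of_forall fun x _ => ?_)
  simp [slope_def_field, hAux]
  ring

lemma hAux_lt_two {x : ℝ} (hx₀ : 0 < x) (hx₁ : x < 1) : hAux x < 2 := by
  have hpos : 0 < 1 - x ^ 2 := by nlinarith
  calc hAux x < (1 - x ^ 2) / x * (2 * x / (1 - x ^ 2)) := by
        unfold hAux; gcongr; exact log_one_add_div_one_sub_lt hx₀ hx₁
    _ = 2 := by field_simp

theorem stmt8 :
    (∀ x ∈ Set.Ioo (0 : ℝ) 1, deriv hAux x < -2 * x ∧ -2 * x < 0) ∧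
    Filter.Tendsto hAux (nhdsWithin 0 (Set.Ioi 0)) (nhds 2) ∧
    ∀ x ∈ Set.Ioo (0 : ℝ) 1, hAux x < 2 :=
  ⟨fun x ⟨hx₀, hx₁⟩ => ⟨deriv_hAux_lt hx₀ hx₁, by linarith⟩, tendsto_hAux_nhdsGT_zero,
    fun x ⟨hx₀, hx₁⟩ => hAux_lt_two hx₀ hx₁⟩
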